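/- Let T be an infinite tree without vertices of degree one, and let Γ be a group acting on T by tree automorphisms such that the induced action of Γ on ∂T (with the shadow topology) is minimal and Γ contains at least one hyperbolic element. Then the action of Γ on T is minimal. -/

import Mathlib

open Filter Set

section PowersDefs

/-- A Powers group: for every finite `F ⊆ Γ \ {1}` and every `N ≥ 1` there is a partition
`Γ = C ⊔ D` (here `D = Cᶜ`) and elements `g 1, …, g N` with `fC ∩ C = ∅` for `f ∈ F` and
`g j D ∩ g k D = ∅` for `j ≠ k`. -/
def IsPowersGroup (Γ : Type*) [Group Γ] : Prop :=
  Nontrivial Γ ∧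
    ∀ F : Finset Γ, (1 : Γ) ∉ F → ∀ N : ℕ, 1 ≤ N →
      ∃ (C : Set Γ) (g : Fin N → Γ),
        (∀ f ∈ F, (fun x => f * x) '' C ∩ C = ∅) ∧
        ∀ j k : Fin N, j ≠ k →
          (fun x => g j * x) '' Cᶜ ∩ (fun x => g k * x) '' Cᶜ = ∅

/-- A subgroup is subnormal if there is a finite chain of successively normal subgroups
reaching the whole group. -/
def IsSubnormalIn {Γ : Type*} [Group Γ] (N : Subgroup Γ) : Prop :=
  ∃ (k : ℕ) (c : ℕ → Subgroup Γ), c 0 = N ∧ c k = ⊤ ∧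
    ∀ i < k, c i ≤ c (i + 1) ∧ ∀ x ∈ c (i + 1), ∀ y ∈ c i, x * y * x⁻¹ ∈ c i

/-- A strongly Powers group: every nontrivial subnormal subgroup is a Powers group. -/
def IsStronglyPowersGroup (Γ : Type*) [Group Γ] : Prop :=
  ∀ N : Subgroup Γ, IsSubnormalIn N → N ≠ ⊥ → IsPowersGroup N

end PowersDefs

section TreeDefs

variable {V : Type*}

/-- A ray in a graph: a sequence of vertices with `d(x m, x n) = |m - n|`. -/
def IsRay (G : SimpleGraph V) (x : ℕ → V) : Prop :=
  ∀ m n : ℕ, G.dist (x m) (x n) = ((m : ℤ) - (n : ℤ)).natAbs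

/-- Two rays are cofinal if up to an index shift they eventually coincide. -/
def Cofinal (x y : ℕ → V) : Prop :=
  ∃ a b : ℕ, ∀ᶠ n in atTop, y (n + a) = x (n + b)

/-- The type of rays of a graph. -/
def Ray (G : SimpleGraph V) : Type _ := {x : ℕ → V // IsRay G x}

/-- The boundary of a tree: cofinality classes of rays. -/
def Boundary (G : SimpleGraph V) : Type _ :=
  Quot (fun r s : Ray G => Cofinal r.1 s.1)

/-- The boundary point represented by a ray. -/
def Boundary.mk (G : SimpleGraph V) (r : Ray G) : Boundary G := Quot.mk _ r

/-- The shadow of the oriented edge `(u, v)`: boundary points represented by rays that are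
eventually strictly closer to `v` than to `u`. -/
def Shadow (G : SimpleGraph V) (u v : V) : Set (Boundary G) :=
  {ξ | ∃ r : Ray G, Boundary.mk G r = ξ ∧
    ∀ᶠ n in atTop, G.dist v (r.1 n) < G.dist u (r.1 n)}

/-- The shadow topology on the boundary of a tree. -/
instance (G : SimpleGraph V) : TopologicalSpace (Boundary G) :=
  TopologicalSpace.generateFrom {s | ∃ u v : V, G.Adj u v ∧ s = Shadow G u v}

/-- The action of `Γ` on the vertices is by graph automorphisms. -/
def IsGraphAction (G : SimpleGraph V) (Γ : Type*) [Group Γ] [MulAction Γ V] : Prop :=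
  ∀ (γ : Γ) (u v : V), G.Adj u v ↔ G.Adj (γ • u) (γ • v)

variable {Γ : Type*} [Group Γ] [MulAction Γ V]

theorem dist_smul_eq {G : SimpleGraph V} (h : IsGraphAction G Γ) (γ : Γ) (u v : V) :
    G.dist (γ • u) (γ • v) = G.dist u v := by
  have key : ∀ (g : Γ) (a b : V), G.dist (g • a) (g • b) ≤ G.dist a b := by
    intro g a b
    by_cases hr : G.Reachable a b
    · obtain ⟨w, hw⟩ := hr.exists_walk_length_eq_dist
      have hle : G.dist (g • a) (g • b) ≤
          (w.map ⟨fun x => g • x, fun hx => (h g _ _).mp hx⟩).length :=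
        SimpleGraph.dist_le _
      rwa [SimpleGraph.Walk.length_map, hw] at hle
    · have hr2 : ¬ G.Reachable (g • a) (g • b) := by
        intro hc
        refine hr ?_
        have h' := hc.map (⟨fun x => g⁻¹ • x, fun hx => (h g⁻¹ _ _).mp hx⟩ : G →g G)
        have h'' : G.Reachable (g⁻¹ • (g • a)) (g⁻¹ • (g • b)) := h'
        simpa using h''
      rw [SimpleGraph.dist_eq_zero_of_not_reachable hr,
        SimpleGraph.dist_eq_zero_of_not_reachable hr2]
  refine le_antisymm (key γ u v) ?_
  have h2 := key γ⁻¹ (γ • u) (γ • v)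
  simpa using h2

/-- The image of a ray under an automorphism. -/
def raySmul {G : SimpleGraph V} (h : IsGraphAction G Γ) (γ : Γ) (r : Ray G) : Ray G :=
  ⟨fun n => γ • r.1 n, fun m n => by rw [dist_smul_eq h]; exact r.2 m n⟩

/-- The induced action of an automorphism on the boundary. -/
def Boundary.smul {G : SimpleGraph V} (h : IsGraphAction G Γ) (γ : Γ) :
    Boundary G → Boundary G :=
  Quot.map (raySmul h γ) (by
    rintro r s ⟨a, b, hab⟩
    exact ⟨a, b, hab.mono fun n hn => by simp only [raySmul, hn]⟩)

/-- The fixed-point set of `γ` on the boundary. -/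
def FixedBoundary {G : SimpleGraph V} (h : IsGraphAction G Γ) (γ : Γ) :
    Set (Boundary G) :=
  {ξ | Boundary.smul h γ ξ = ξ}

/-- A slender action: every nontrivial element has a fixed-point set with empty interior in
the boundary. -/
def SlenderAction {G : SimpleGraph V} (h : IsGraphAction G Γ) : Prop :=
  ∀ γ : Γ, γ ≠ 1 → interior (FixedBoundary h γ) = ∅

/-- A minimal action on a tree: no nonempty proper invariant subtree. -/
def MinimalTreeAction (G : SimpleGraph V) (Γ : Type*) [Group Γ] [MulAction Γ V] : Prop :=
  ∀ S : Set V, S.Nonempty → (∀ (γ : Γ), ∀ v ∈ S, γ • v ∈ S) →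
    (G.induce S).Connected → S = Set.univ

/-- An inversion of a graph. -/
def IsInversionAut (G : SimpleGraph V) (γ : Γ) : Prop :=
  ∃ u v : V, G.Adj u v ∧ γ • u = v ∧ γ • v = u

/-- An elliptic automorphism: one fixing a vertex. -/
def IsEllipticAut (V : Type*) [MulAction Γ V] (γ : Γ) : Prop := ∃ v : V, γ • v = v

/-- A hyperbolic automorphism: neither elliptic nor an inversion. -/
def IsHyperbolicAut (G : SimpleGraph V) (γ : Γ) : Prop :=
  ¬ IsEllipticAut V γ ∧ ¬ IsInversionAut G γ

/-- The axis of an automorphism: the set of vertices minimizing the displacement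
`d(x, γ x)`. -/
def Axis (G : SimpleGraph V) (γ : Γ) : Set V :=
  {x : V | ∀ y : V, G.dist x (γ • x) ≤ G.dist y (γ • y)}

/-- Two automorphisms are transverse if the intersection of their axes is finite. -/
def Transverse (G : SimpleGraph V) (γ δ : Γ) : Prop :=
  (Axis G γ ∩ Axis G δ).Finite

/-- A strongly hyperbolic action on a tree: it admits a pair of transverse hyperbolic
elements. -/
def StronglyHyperbolicTreeAction (G : SimpleGraph V) (Γ : Type*) [Group Γ] [MulAction Γ V] :
    Prop :=
  ∃ γ δ : Γ, IsHyperbolicAut G γ ∧ IsHyperbolicAut G δ ∧ Transverse G γ δ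

/-- A pending ray: a ray whose vertices eventually all have degree two. -/
def IsPendingRay (G : SimpleGraph V) (x : ℕ → V) : Prop :=
  IsRay G x ∧ ∀ᶠ n in atTop, (G.neighborSet (x n)).ncard = 2

/-- A linear tree: its vertex set is an enumeration `(x n), n ∈ ℤ` with
`d(x m, x n) = |m - n|`. -/
def IsLinearTree (G : SimpleGraph V) : Prop :=
  ∃ x : ℤ → V, Function.Surjective x ∧
    ∀ m n : ℤ, G.dist (x m) (x n) = (m - n).natAbs

end TreeDefs

/-!
Let `S` be a nonempty invariant subtree and `γ` hyperbolic. Pick `x ∈ S` of minimal displacement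
`ℓ = d(x, γ x)`; the geodesic `P` from `x` to `γ x` lies in `S`, and `P, γ P, γ² P, …`
concatenate to a ray in `S`: a backtrack at a junction would make `γ` an inversion (`ℓ = 1`) or
give the second vertex of `P` displacement `ℓ - 2`. Call `ξ ∈ ∂T` a limit point of `S` if for
every edge `(u, v)` whose shadow contains `ξ` some vertex of `S` lies beyond `v`. The limit points
form a closed invariant set, nonempty thanks to the ray, hence all of `∂T`. But if a vertex lay
outside `S`, some edge `(u, v)` would leave `S`, and as `S` is connected nothing of `S` lies
beyond `v`; yet the shadow of `(u, v)` is nonempty because `T` has no leaves.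
-/

namespace SimpleGraph

variable {V : Type*} {G : SimpleGraph V}

theorem IsTree.length_eq_dist_of_isPath (hT : G.IsTree) {a b : V} {p : G.Walk a b}
    (hp : p.IsPath) : p.length = G.dist a b := by
  obtain ⟨q, hq, hqlen⟩ := hT.connected.exists_path_of_dist a b
  rw [(hT.existsUnique_path a b).unique hp hq, hqlen]

theorem Walk.dist_getVert_le {a b : V} (p : G.Walk a b) {i j : ℕ} (hij : i ≤ j) :
    G.dist (p.getVert i) (p.getVert j) ≤ j - i := by
  have hend : (p.drop i).getVert (j - i) = p.getVert j := by
    rw [drop_getVert, Nat.add_sub_cancel' hij]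
  calc G.dist (p.getVert i) (p.getVert j)
      ≤ (((p.drop i).take (j - i)).copy rfl hend).length := dist_le _
    _ ≤ j - i := by simp

theorem IsTree.eq_of_adj_of_dist_lt (hT : G.IsTree) {x c a b : V} (hca : G.Adj c a)
    (hcb : G.Adj c b) (ha : G.dist x a < G.dist x c) (hb : G.dist x b < G.dist x c) :
    a = b := by
  classical
  obtain ⟨p, hp, -⟩ := hT.connected.exists_path_of_dist x c
  have gate : ∀ y, G.Adj c y → G.dist x y < G.dist x c → y = p.penultimate := by
    intro y hcy hy
    obtain ⟨q, hq, hqlen⟩ := hT.connected.exists_path_of_dist x y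
    have hc : c ∉ q.support := fun hc ↦ by
      have := dist_le (q.takeUntil c hc)
      have := q.length_takeUntil_le_length hc
      omega
    exact hT.isAcyclic.eq_penultimate_of_adj_end hp hcy
      (hT.isAcyclic.mem_support_of_ne_mem_support_of_adj_of_isPath hp hq hcy hc)
  rw [gate a hca ha, gate b hcb hb]

theorem Preconnected.exists_isPath_forall_mem_support_of_induce {S : Set V}
    (hS : (G.induce S).Preconnected) {a b : V} (ha : a ∈ S) (hb : b ∈ S) :
    ∃ p : G.Walk a b, p.IsPath ∧ ∀ x ∈ p.support, x ∈ S := by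
  classical
  obtain ⟨w⟩ := hS ⟨a, ha⟩ ⟨b, hb⟩
  let w' : G.Walk a b := w.map (Embedding.induce S).toHom
  refine ⟨w'.bypass, w'.bypass_isPath, fun x hx ↦ ?_⟩
  obtain ⟨y, -, rfl⟩ :=
    List.mem_map.mp (Walk.support_map _ w ▸ w'.support_bypass_subset_support hx)
  exact y.2

theorem IsTree.dist_lt_dist_of_adj_of_notMem (hT : G.IsTree) {S : Set V}
    (hS : (G.induce S).Preconnected) {u v t : V} (hu : u ∈ S) (hv : v ∉ S) (huv : G.Adj u v)
    (ht : t ∈ S) : G.dist u t < G.dist v t := by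
  obtain ⟨q, hq, hqS⟩ := hS.exists_isPath_forall_mem_support_of_induce hu ht
  have hvq : (Walk.cons huv.symm q).IsPath :=
    Walk.IsPath.cons hq fun hvq ↦ hv (hqS v hvq)
  rw [← hT.length_eq_dist_of_isPath hq, ← hT.length_eq_dist_of_isPath hvq, Walk.length_cons]
  omega

theorem exists_adj_ne_of_ncard_neighborSet_ne_one {a b : V}
    (hdeg : (G.neighborSet b).ncard ≠ 1) (hab : G.Adj a b) : ∃ c, G.Adj b c ∧ c ≠ a := by
  by_contra! h
  have hb : G.neighborSet b = {a} := eq_singleton_iff_unique_mem.mpr ⟨hab.symm, h⟩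
  exact hdeg (by rw [hb, ncard_singleton])

end SimpleGraph

section Rays

open SimpleGraph

variable {V : Type*} {G : SimpleGraph V}

def IsNonBacktracking (G : SimpleGraph V) (r : ℕ → V) : Prop :=
  ∀ n, G.Adj (r n) (r (n + 1)) ∧ r (n + 2) ≠ r n

theorem IsNonBacktracking.dist_add (hT : G.IsTree) {r : ℕ → V} (hr : IsNonBacktracking G r)
    (m k : ℕ) : G.dist (r m) (r (m + k)) = k := by
  suffices ∀ k, G.dist (r m) (r (m + k)) = k ∧ G.dist (r m) (r (m + k + 1)) = k + 1 from
    (this k).1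
  intro k
  induction k with
  | zero => exact ⟨by simp, by simpa using (hr m).1⟩
  | succ k ih =>
    refine ⟨ih.2, ?_⟩
    rw [← add_assoc]
    rcases hT.dist_eq_dist_add_one_of_adj (r m) (hr (m + k + 1)).1 with h | h
    · exact absurd (hT.eq_of_adj_of_dist_lt (x := r m) (hr (m + k + 1)).1 (hr (m + k)).1.symm
        (by omega) (by omega)) (hr (m + k)).2
    · omega

theorem IsNonBacktracking.isRay (hT : G.IsTree) {r : ℕ → V} (hr : IsNonBacktracking G r) :
    IsRay G r := by
  intro m n
  rcases le_total m n with h | h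
  · obtain ⟨k, rfl⟩ := Nat.exists_eq_add_of_le h
    rw [hr.dist_add hT]
    omega
  · obtain ⟨k, rfl⟩ := Nat.exists_eq_add_of_le h
    rw [dist_comm, hr.dist_add hT]
    omega

theorem exists_isNonBacktracking_of_adj
    (hnext : ∀ a b, G.Adj a b → ∃ c, G.Adj b c ∧ c ≠ a) {u v : V} (huv : G.Adj u v) :
    ∃ r, IsNonBacktracking G r ∧ r 0 = u ∧ r 1 = v := by
  choose next hnext_adj hnext_ne using hnext
  let e : ℕ → {p : V × V // G.Adj p.1 p.2} := fun n ↦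
    Nat.rec ⟨(u, v), huv⟩ (fun _ p ↦ ⟨(p.1.2, next _ _ p.2), hnext_adj _ _ p.2⟩) n
  exact ⟨fun n ↦ (e n).1.1, fun n ↦ ⟨(e n).2, hnext_ne _ _ (e n).2⟩, rfl, rfl⟩

variable {Γ : Type*} [Group Γ] [MulAction Γ V]

theorem IsGraphAction.isNonBacktracking_of_periodic (hact : IsGraphAction G Γ) {γ : Γ}
    {ℓ : ℕ} (hℓ : 0 < ℓ) {r : ℕ → V} (hper : ∀ n, r (n + ℓ) = γ • r n)
    (hr : ∀ n < ℓ, G.Adj (r n) (r (n + 1)) ∧ r (n + 2) ≠ r n) : IsNonBacktracking G r := by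
  intro n
  induction n using Nat.strong_induction_on with
  | _ n ih =>
    rcases lt_or_ge n ℓ with hn | hn
    · exact hr n hn
    obtain ⟨m, rfl⟩ := Nat.exists_eq_add_of_le' hn
    have hm := ih m (by omega)
    rw [show m + ℓ + 1 = m + 1 + ℓ by omega, show m + ℓ + 2 = m + 2 + ℓ by omega,
      hper, hper, hper]
    exact ⟨(hact γ _ _).mp hm.1, fun h ↦ hm.2 (MulAction.injective γ h)⟩

theorem smul_snd_ne_penultimate {γ : Γ} (hγ : ¬ IsInversionAut G γ) {x : V}
    (P : G.Walk x (γ • x)) (hpos : 0 < P.length)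
    (hmin : P.length ≤ G.dist P.snd (γ • P.snd)) : γ • P.snd ≠ P.penultimate := by
  intro h
  rcases Nat.lt_or_ge P.length 2 with hℓ | hℓ
  · have hsnd : P.snd = γ • x := by
      rw [Walk.snd, show 1 = P.length by omega, Walk.getVert_length]
    have hpen : P.penultimate = x := by
      rw [Walk.penultimate, show P.length - 1 = 0 by omega, Walk.getVert_zero]
    have hadj : G.Adj x (γ • x) := by
      simpa [Walk.getVert_zero, hsnd] using P.adj_getVert_succ (i := 0) hpos
    exact hγ ⟨x, γ • x, hadj, rfl, by rw [← hsnd, h, hpen]⟩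
  · have := P.dist_getVert_le (by omega : 1 ≤ P.length - 1)
    rw [← Walk.snd, ← Walk.penultimate, ← h] at this
    omega

def concatTranslates (γ : Γ) {x : V} (P : G.Walk x (γ • x)) (n : ℕ) : V :=
  γ ^ (n / P.length) • P.getVert (n % P.length)

theorem concatTranslates_add_length {γ : Γ} {x : V} {P : G.Walk x (γ • x)}
    (hpos : 0 < P.length) (n : ℕ) :
    concatTranslates γ P (n + P.length) = γ • concatTranslates γ P n := by
  simp only [concatTranslates, Nat.add_div_right n hpos, Nat.add_mod_right, pow_succ', mul_smul]

theorem concatTranslates_of_le_length {γ : Γ} {x : V} {P : G.Walk x (γ • x)} {n : ℕ}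
    (hn : n ≤ P.length) : concatTranslates γ P n = P.getVert n := by
  rcases hn.lt_or_eq with hn | rfl
  · simp [concatTranslates, Nat.div_eq_of_lt hn, Nat.mod_eq_of_lt hn]
  rcases P.length.eq_zero_or_pos with h0 | hpos
  · simp [concatTranslates, h0]
  rw [← zero_add P.length, concatTranslates_add_length hpos, zero_add, Walk.getVert_length]
  simp [concatTranslates]

theorem concatTranslates_mem {γ : Γ} {x : V} {P : G.Walk x (γ • x)} {S : Set V}
    (hSγ : ∀ v ∈ S, γ • v ∈ S) (hPS : ∀ v ∈ P.support, v ∈ S) (n : ℕ) :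
    concatTranslates γ P n ∈ S := by
  have hpow : ∀ k, ∀ y ∈ S, γ ^ k • y ∈ S := by
    intro k
    induction k with
    | zero => simp
    | succ k ih => exact fun y hy ↦ by rw [pow_succ', mul_smul]; exact hSγ _ (ih y hy)
  exact hpow _ _ (hPS _ (P.getVert_mem_support _))

theorem IsGraphAction.isNonBacktracking_concatTranslates (hact : IsGraphAction G Γ) {γ : Γ}
    {x : V} {P : G.Walk x (γ • x)} (hP : P.IsPath) (hpos : 0 < P.length)
    (hjunction : γ • P.snd ≠ P.penultimate) : IsNonBacktracking G (concatTranslates γ P) := by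
  refine hact.isNonBacktracking_of_periodic hpos (concatTranslates_add_length hpos)
    fun n hn ↦ ⟨?_, ?_⟩
  · rw [concatTranslates_of_le_length hn.le, concatTranslates_of_le_length hn]
    exact P.adj_getVert_succ hn
  by_cases hn2 : n + 2 ≤ P.length
  · rw [concatTranslates_of_le_length hn.le, concatTranslates_of_le_length hn2]
    exact fun h ↦ absurd (hP.getVert_injOn hn2 (show n ≤ P.length by omega) h) (by omega)
  · rw [show n + 2 = 1 + P.length by omega, concatTranslates_add_length hpos,
      concatTranslates_of_le_length hpos, concatTranslates_of_le_length hn.le,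
      show n = P.length - 1 by omega]
    exact hjunction

theorem IsHyperbolicAut.exists_isRay_forall_mem (hT : G.IsTree) (hact : IsGraphAction G Γ)
    {γ : Γ} (hγ : IsHyperbolicAut G γ) {S : Set V} (hSne : S.Nonempty)
    (hSγ : ∀ v ∈ S, γ • v ∈ S) (hS : (G.induce S).Preconnected) :
    ∃ r : ℕ → V, IsRay G r ∧ ∀ n, r n ∈ S := by
  obtain ⟨x, hxS, hxmin⟩ :=
    exists_minimalFor_of_wellFoundedLT (· ∈ S) (fun s ↦ G.dist s (γ • s)) hSne
  obtain ⟨P, hP, hPS⟩ := hS.exists_isPath_forall_mem_support_of_induce hxS (hSγ x hxS)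
  have hPlen : P.length = G.dist x (γ • x) := hT.length_eq_dist_of_isPath hP
  have hpos : 0 < P.length := by
    by_contra! h0
    exact hγ.1 ⟨x, (hT.connected.dist_eq_zero_iff.mp (by omega)).symm⟩
  have hmin : ∀ y ∈ S, P.length ≤ G.dist y (γ • y) := fun y hy ↦
    hPlen ▸ le_of_not_gt fun h ↦ absurd (hxmin hy h.le) (not_le.mpr h)
  have hjunction : γ • P.snd ≠ P.penultimate :=
    smul_snd_ne_penultimate hγ.2 P hpos (hmin _ (hPS _ (P.getVert_mem_support 1)))
  exact ⟨concatTranslates γ P,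
    (hact.isNonBacktracking_concatTranslates hP hpos hjunction).isRay hT,
    concatTranslates_mem hSγ hPS⟩

end Rays

section Boundary

variable {V : Type*} {G : SimpleGraph V}

theorem eventually_iff_of_cofinal {x y : ℕ → V} (h : Cofinal x y) (p : V → Prop) :
    (∀ᶠ n in atTop, p (x n)) ↔ ∀ᶠ n in atTop, p (y n) := by
  have shift : ∀ (z : ℕ → V) (k : ℕ),
      (∀ᶠ n in atTop, p (z (n + k))) ↔ ∀ᶠ n in atTop, p (z n) := by
    intro z k
    conv_rhs => rw [← map_add_atTop_eq_nat k]
    rfl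
  obtain ⟨a, b, hab⟩ := h
  rw [← shift x b, ← shift y a]
  exact eventually_congr (hab.mono fun n h ↦ by rw [h])

theorem Boundary.mk_mem_shadow_iff {r : Ray G} {u v : V} :
    Boundary.mk G r ∈ Shadow G u v ↔
      ∀ᶠ n in atTop, G.dist v (r.1 n) < G.dist u (r.1 n) := by
  refine ⟨fun ⟨r', hr', hev⟩ ↦ ?_, fun h ↦ ⟨r, rfl, h⟩⟩
  have key : ∀ s t : Ray G, Relation.EqvGen (fun s t : Ray G ↦ Cofinal s.1 t.1) s t →
      ((∀ᶠ n in atTop, G.dist v (s.1 n) < G.dist u (s.1 n)) ↔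
        ∀ᶠ n in atTop, G.dist v (t.1 n) < G.dist u (t.1 n)) := by
    intro s t hst
    induction hst with
    | rel s t h => exact eventually_iff_of_cofinal h fun w ↦ G.dist v w < G.dist u w
    | refl => rfl
    | symm _ _ _ ih => exact ih.symm
    | trans _ _ _ _ _ ih₁ ih₂ => exact ih₁.trans ih₂
  exact (key _ _ (Quot.eqvGen_exact hr')).mp hev

theorem isOpen_shadow {u v : V} (h : G.Adj u v) : IsOpen (Shadow G u v) :=
  TopologicalSpace.isOpen_generateFrom_of_mem ⟨u, v, h, rfl⟩

variable {Γ : Type*} [Group Γ] [MulAction Γ V]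

theorem IsGraphAction.dist_smul_right (hact : IsGraphAction G Γ) (γ : Γ) (u w : V) :
    G.dist u (γ • w) = G.dist (γ⁻¹ • u) w := by
  rw [← dist_smul_eq hact γ⁻¹, inv_smul_smul]

theorem IsGraphAction.mem_shadow_of_smul_mem (hact : IsGraphAction G Γ) {γ : Γ}
    {ξ : Boundary G} {u v : V} (h : Boundary.smul hact γ ξ ∈ Shadow G u v) :
    ξ ∈ Shadow G (γ⁻¹ • u) (γ⁻¹ • v) := by
  obtain ⟨r, rfl⟩ := Quot.exists_rep ξ
  have h' := (Boundary.mk_mem_shadow_iff (r := raySmul hact γ r)).mp h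
  change Boundary.mk G r ∈ _
  refine Boundary.mk_mem_shadow_iff.mpr (h'.mono fun n hn ↦ ?_)
  simpa only [raySmul, hact.dist_smul_right] using hn

/-- For a subtree `S`, these are the ends of `S`. -/
def limitSet (G : SimpleGraph V) (S : Set V) : Set (Boundary G) :=
  {ξ | ∀ u v, G.Adj u v → ξ ∈ Shadow G u v → ∃ s ∈ S, G.dist v s < G.dist u s}

theorem isClosed_limitSet (G : SimpleGraph V) (S : Set V) : IsClosed (limitSet G S) := by
  refine isOpen_compl_iff.mp (isOpen_iff_forall_mem_open.mpr fun ξ hξ ↦ ?_)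
  simp only [limitSet, mem_compl_iff, mem_ofPred_eq, not_forall, not_exists, not_and] at hξ
  obtain ⟨u, v, huv, hξuv, hS⟩ := hξ
  refine ⟨Shadow G u v, fun η hη hηL ↦ ?_, isOpen_shadow huv, hξuv⟩
  obtain ⟨s, hs, hlt⟩ := hηL u v huv hη
  exact hS s hs hlt

theorem IsGraphAction.smul_mem_limitSet (hact : IsGraphAction G Γ) {γ : Γ} {S : Set V}
    (hSγ : ∀ v ∈ S, γ • v ∈ S) {ξ : Boundary G} (hξ : ξ ∈ limitSet G S) :
    Boundary.smul hact γ ξ ∈ limitSet G S := by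
  intro u v huv hshadow
  obtain ⟨s, hs, hlt⟩ :=
    hξ _ _ ((hact γ⁻¹ u v).mp huv) (hact.mem_shadow_of_smul_mem hshadow)
  exact ⟨γ • s, hSγ s hs, by simpa only [hact.dist_smul_right] using hlt⟩

theorem mk_mem_limitSet {S : Set V} {r : Ray G} (hr : ∀ n, r.1 n ∈ S) :
    Boundary.mk G r ∈ limitSet G S := fun _ _ _ hshadow ↦
  let ⟨n, hn⟩ := (Boundary.mk_mem_shadow_iff.mp hshadow).exists
  ⟨r.1 n, hr n, hn⟩

theorem SimpleGraph.IsTree.shadow_nonempty (hT : G.IsTree)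
    (hdeg : ∀ v, (G.neighborSet v).ncard ≠ 1) {u v : V} (huv : G.Adj u v) :
    (Shadow G u v).Nonempty := by
  obtain ⟨r, hr, hr0, hr1⟩ := exists_isNonBacktracking_of_adj
    (fun a b hab ↦ exists_adj_ne_of_ncard_neighborSet_ne_one (hdeg b) hab) huv
  refine ⟨_, Boundary.mk_mem_shadow_iff (r := ⟨r, hr.isRay hT⟩).mpr
    (eventually_atTop.mpr ⟨1, fun n hn ↦ ?_⟩)⟩
  have hdu := hr.dist_add hT 0 n
  have hdv := hr.dist_add hT 1 (n - 1)
  rw [hr0, zero_add] at hdu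
  rw [hr1, show 1 + (n - 1) = n by omega] at hdv
  change G.dist v (r n) < G.dist u (r n)
  omega

theorem SimpleGraph.IsTree.eq_univ_of_limitSet_eq_univ (hT : G.IsTree)
    (hdeg : ∀ v, (G.neighborSet v).ncard ≠ 1) {S : Set V} (hSne : S.Nonempty)
    (hS : (G.induce S).Preconnected) (hL : limitSet G S = univ) : S = univ := by
  obtain ⟨s₀, hs₀⟩ := hSne
  refine eq_univ_of_forall fun w ↦ by_contra fun hw ↦ ?_
  obtain ⟨⟨⟨u, v⟩, huv⟩, -, hu, hv⟩ := (hT.connected s₀ w).some.exists_boundary_dart S hs₀ hw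
  dsimp only at huv hu hv
  obtain ⟨ξ, hξ⟩ := hT.shadow_nonempty hdeg huv
  obtain ⟨s, hs, hlt⟩ := (hL ▸ mem_univ ξ : ξ ∈ limitSet G S) u v huv hξ
  exact lt_asymm hlt (hT.dist_lt_dist_of_adj_of_notMem hS hu hv huv hs)

end Boundary

section Statements

variable {V : Type*}

theorem statement12_general (G : SimpleGraph V) (hT : G.IsTree)
    (hdeg : ∀ v : V, (G.neighborSet v).ncard ≠ 1)
    {Γ : Type*} [Group Γ] [MulAction Γ V]
    (hact : IsGraphAction G Γ)
    (hbmin : ∀ C : Set (Boundary G), IsClosed C →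
      (∀ γ : Γ, ∀ ξ ∈ C, Boundary.smul hact γ ξ ∈ C) →
      C = ∅ ∨ C = Set.univ)
    (hhyp : ∃ γ : Γ, IsHyperbolicAut G γ) :
    MinimalTreeAction G Γ := by
  intro S hSne hSinv hSconn
  obtain ⟨γ, hγ⟩ := hhyp
  obtain ⟨r, hr, hrS⟩ :=
    hγ.exists_isRay_forall_mem hT hact hSne (hSinv γ) hSconn.preconnected
  have hL : (limitSet G S).Nonempty := ⟨_, mk_mem_limitSet (r := ⟨r, hr⟩) hrS⟩
  have hinv : ∀ δ : Γ, ∀ ξ ∈ limitSet G S, Boundary.smul hact δ ξ ∈ limitSet G S :=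
    fun δ _ ↦ hact.smul_mem_limitSet (hSinv δ)
  exact hT.eq_univ_of_limitSet_eq_univ hdeg hSne hSconn.preconnected
    ((hbmin _ (isClosed_limitSet G S) hinv).resolve_left hL.ne_empty)

theorem statement12 (G : SimpleGraph V) (hT : G.IsTree) [Infinite V]
    (hdeg : ∀ v : V, (G.neighborSet v).ncard ≠ 1)
    {Γ : Type*} [Group Γ] [MulAction Γ V]
    (hact : IsGraphAction G Γ)
    (hbmin : ∀ C : Set (Boundary G), IsClosed C →
      (∀ γ : Γ, ∀ ξ ∈ C, Boundary.smul hact γ ξ ∈ C) →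
      C = ∅ ∨ C = Set.univ)
    (hhyp : ∃ γ : Γ, IsHyperbolicAut G γ) :
    MinimalTreeAction G Γ :=
  statement12_general G hT hdeg hact hbmin hhyp

end Statements
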